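/- arXiv:2508.02657 — 6 statements merged into one kernel-verified Lean document; each statement's English description precedes it below -/
import Mathlib

section
/- For λ_s > 0, λ_e > 0 and n ≥ 2, the RC-Gossip freshness (λ_s/(n·λ_e))·(1 − (λ_s/(λ_s+λ_e))^n) is strictly greater than the traditional gossip freshness λ_s/(λ_s + n·λ_e). -/
lemma bernoulli_strict (x : ℝ) (hx : 0 < x) (n : ℕ) (hn : 2 ≤ n) :
    1 + n * x < (1 + x) ^ n := by
  obtain ⟨m, rfl⟩ := Nat.exists_eq_add_of_le hn
  have h1 : (1 : ℝ) + m * x ≤ (1 + x) ^ m :=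
    one_add_mul_le_pow (by linarith) m
  have h2 : (1 + x) ^ (2 + m) = (1 + x) ^ 2 * (1 + x) ^ m := pow_add _ 2 m
  have hpos : (0 : ℝ) < (1 + x) ^ 2 := by positivity
  have h3 : (1 + x) ^ 2 * (1 + m * x) ≤ (1 + x) ^ 2 * (1 + x) ^ m :=
    mul_le_mul_of_nonneg_left h1 (le_of_lt hpos)
  have hm : (0:ℝ) ≤ (m:ℝ) := Nat.cast_nonneg m
  push_cast
  nlinarith [sq_nonneg x, mul_pos hx hx, mul_nonneg hm (le_of_lt (mul_pos hx hx))]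

theorem stmt_1 (lams lame : ℝ) (hs : 0 < lams) (he : 0 < lame)
    (n : ℕ) (hn : 2 ≤ n) :
    (lams / (n * lame)) * (1 - (lams / (lams + lame)) ^ n)
      > lams / (lams + n * lame) := by
  have hn0 : (0:ℝ) < (n:ℝ) := by positivity
  have hA : (0:ℝ) < lams + lame := by linarith
  have hB : (0:ℝ) < lams + n * lame := by positivity
  have hC : (0:ℝ) < (n:ℝ) * lame := by positivity
  -- key: (lams + n*lame) * (lams/(lams+lame))^n < lams
  have hkey : (lams + n * lame) * (lams / (lams + lame)) ^ n < lams := by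
    have hb := bernoulli_strict (lame / lams) (by positivity) n hn
    have h1 : 1 + (n:ℝ) * (lame / lams) = (lams + n * lame) / lams := by
      field_simp
    have h2 : (1 + lame / lams) = (lams + lame) / lams := by field_simp
    rw [h1, h2, div_pow] at hb
    have hbn : (0:ℝ) < lams ^ n := by positivity
    rw [div_lt_div_iff₀ hs hbn] at hb
    -- hb : (lams + n*lame) * lams ^ n < (lams+lame)^n * lams
    have hr : (lams / (lams + lame)) ^ n = lams ^ n / (lams + lame) ^ n :=
      div_pow _ _ n
    rw [hr]
    rw [mul_div_assoc', div_lt_iff₀ (by positivity : (0:ℝ) < (lams+lame)^n)]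
    nlinarith
  rw [gt_iff_lt, div_mul_eq_mul_div, div_lt_div_iff₀ hB hC]
  nlinarith
end

section
/- For λ_s, λ_g, λ_e > 0 and n ≥ 1, the sum ∑_{k=1}^{n} [∏_{j=1}^{k−1} ((n−j)(λ_s+(j−1)λ_g)) / ((n−j+1)(λ_s+(j−1)λ_g+λ_e))] · (λ_s+(k−1)λ_g) / ((n−k+1)(λ_s+(k−1)λ_g+λ_e)) equals (1/n)·∑_{k=1}^{n} ∏_{j=1}^{k} (λ_s+(j−1)λ_g)/(λ_s+(j−1)λ_g+λ_e). -/
lemma tele_aux (n m : ℕ) (h : m + 1 ≤ n) :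
    ∏ j ∈ Finset.Icc 1 m, (((n : ℝ) - j) / ((n : ℝ) - j + 1)) = ((n : ℝ) - m) / n := by
  induction m with
  | zero =>
    have hn0 : (n : ℝ) ≠ 0 := by
      have : (1 : ℝ) ≤ n := by exact_mod_cast h
      linarith
    simp [hn0]
  | succ m ih =>
    have h' : m + 1 ≤ n := le_trans (by omega) h
    rw [Finset.prod_Icc_succ_top (by omega), ih h']
    have hnm : (2 : ℝ) ≤ (n : ℝ) - m := by
      have : (m : ℝ) + 2 ≤ n := by exact_mod_cast h
      linarith
    have h1 : (n : ℝ) - m ≠ 0 := by linarith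
    have hn0 : (n : ℝ) ≠ 0 := by
      have : (0 : ℝ) ≤ m := Nat.cast_nonneg m
      linarith
    push_cast
    have he : (n : ℝ) - (m + 1) + 1 = (n : ℝ) - m := by ring
    rw [he]
    field_simp

theorem stmt_5 (lams lamg lame : ℝ) (hs : 0 < lams) (hg : 0 < lamg) (he : 0 < lame)
    (n : ℕ) (hn : 1 ≤ n) :
    ∑ k ∈ Finset.Icc 1 n,
        (∏ j ∈ Finset.Icc 1 (k - 1),
          (((n : ℝ) - j) * (lams + ((j : ℝ) - 1) * lamg))
            / (((n : ℝ) - j + 1) * (lams + ((j : ℝ) - 1) * lamg + lame)))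
        * ((lams + ((k : ℝ) - 1) * lamg)
            / (((n : ℝ) - k + 1) * (lams + ((k : ℝ) - 1) * lamg + lame)))
      = (1 / n) * ∑ k ∈ Finset.Icc 1 n, ∏ j ∈ Finset.Icc 1 k,
          (lams + ((j : ℝ) - 1) * lamg) / (lams + ((j : ℝ) - 1) * lamg + lame) := by
  rw [Finset.mul_sum]
  apply Finset.sum_congr rfl
  intro k hk
  obtain ⟨hk1, hkn⟩ := Finset.mem_Icc.mp hk
  obtain ⟨m, rfl⟩ : ∃ m, k = m + 1 := ⟨k - 1, (Nat.succ_pred_eq_of_pos hk1).symm⟩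
  have hmn : m + 1 ≤ n := hkn
  have hsimp : m + 1 - 1 = m := rfl
  rw [hsimp]
  have hprod : (∏ j ∈ Finset.Icc 1 m,
      (((n : ℝ) - j) * (lams + ((j : ℝ) - 1) * lamg))
        / (((n : ℝ) - j + 1) * (lams + ((j : ℝ) - 1) * lamg + lame)))
      = (∏ j ∈ Finset.Icc 1 m, (((n : ℝ) - j) / ((n : ℝ) - j + 1)))
        * (∏ j ∈ Finset.Icc 1 m,
            (lams + ((j : ℝ) - 1) * lamg) / (lams + ((j : ℝ) - 1) * lamg + lame)) := by
    rw [← Finset.prod_mul_distrib]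
    exact Finset.prod_congr rfl fun j _ => (div_mul_div_comm _ _ _ _).symm
  rw [hprod, tele_aux n m hmn, Finset.prod_Icc_succ_top (by omega : 1 ≤ m + 1)]
  have hc : ((n : ℝ) - (↑(m + 1) : ℝ) + 1) = (n : ℝ) - m := by push_cast; ring
  rw [hc]
  have hnm : (n : ℝ) - m ≠ 0 := by
    have : (m : ℝ) + 1 ≤ n := by exact_mod_cast hmn
    linarith
  have hn0 : (n : ℝ) ≠ 0 := by
    have : (0 : ℝ) ≤ m := Nat.cast_nonneg m
    have : (m : ℝ) + 1 ≤ n := by exact_mod_cast hmn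
    linarith
  have hB : lams + ((↑(m + 1) : ℝ) - 1) * lamg + lame ≠ 0 := by
    push_cast
    have : (0 : ℝ) ≤ m := Nat.cast_nonneg m
    nlinarith
  set P := ∏ j ∈ Finset.Icc 1 m,
      (lams + ((j : ℝ) - 1) * lamg) / (lams + ((j : ℝ) - 1) * lamg + lame) with hP
  set A := lams + ((↑(m + 1) : ℝ) - 1) * lamg with hA
  field_simp
end

section
/- For λ_s, λ_e > 0 and n ≥ 1, the DC_RC freshness F(n) = (λ_s/(n·λ_e))·(1 − (λ_s/(λ_s+λ_e))^n) is strictly decreasing in n. -/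
theorem stmt_6 (lams lame : ℝ) (hs : 0 < lams) (he : 0 < lame)
    (n m : ℕ) (hn : 1 ≤ n) (hnm : n < m) :
    (lams / (m * lame)) * (1 - (lams / (lams + lame)) ^ m)
      < (lams / (n * lame)) * (1 - (lams / (lams + lame)) ^ n) := by
  set r := lams / (lams + lame) with hrdef
  have hden : 0 < lams + lame := by linarith
  clear_value r
  have hr0 : 0 < r := hrdef ▸ div_pos hs hden
  have hr1 : r < 1 := hrdef ▸ (div_lt_one hden).2 (by linarith)
  have hn0 : (0:ℝ) < n := by exact_mod_cast Nat.lt_of_lt_of_le Nat.zero_lt_one hn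
  have hm0 : (0:ℝ) < m := by exact_mod_cast Nat.lt_of_lt_of_le (Nat.lt_of_lt_of_le Nat.zero_lt_one hn) hnm.le
  have hmn : (0:ℝ) < (m:ℝ) - n := by
    have : (n:ℝ) < m := by exact_mod_cast hnm
    linarith
  have hsum : ∀ k : ℕ, 1 - r ^ k = (1 - r) * ∑ i ∈ Finset.range k, r ^ i := by
    intro k
    have h := geom_sum_mul r k
    linear_combination h
  have hA : ∑ i ∈ Finset.Ico n m, r ^ i ≤ ((m:ℝ) - n) * r ^ n := by
    calc ∑ i ∈ Finset.Ico n m, r ^ i ≤ ∑ _i ∈ Finset.Ico n m, r ^ n := by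
          apply Finset.sum_le_sum
          intro i hi
          exact pow_le_pow_of_le_one hr0.le hr1.le (Finset.mem_Ico.1 hi).1
      _ = ((m:ℝ) - n) * r ^ n := by
          rw [Finset.sum_const, Nat.card_Ico, nsmul_eq_mul]
          rw [Nat.cast_sub hnm.le]
  have hB : (n:ℝ) * r ^ n < ∑ i ∈ Finset.range n, r ^ i := by
    have hne : (Finset.range n).Nonempty := Finset.nonempty_range_iff.2 (by omega)
    have h := Finset.sum_lt_sum_of_nonempty hne
      (f := fun _ => r ^ n) (g := fun i => r ^ i)
      (fun i hi => pow_lt_pow_right_of_lt_one₀ hr0 hr1 (Finset.mem_range.1 hi))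
    simpa [Finset.sum_const, Finset.card_range, nsmul_eq_mul] using h
  have hsplit : ∑ i ∈ Finset.range n, r ^ i + ∑ i ∈ Finset.Ico n m, r ^ i
      = ∑ i ∈ Finset.range m, r ^ i :=
    Finset.sum_range_add_sum_Ico _ hnm.le
  have hSmn : (∑ i ∈ Finset.range m, r ^ i) * n < (∑ i ∈ Finset.range n, r ^ i) * m := by
    nlinarith [mul_le_mul_of_nonneg_left hA hn0.le, mul_lt_mul_of_pos_left hB hmn]
  have key : (1 - r ^ m) * n < (1 - r ^ n) * m := by
    rw [hsum m, hsum n]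
    have h1r : 0 < 1 - r := by linarith
    nlinarith [mul_lt_mul_of_pos_left hSmn h1r]
  rw [div_mul_eq_mul_div, div_mul_eq_mul_div, div_lt_div_iff₀ (by positivity) (by positivity)]
  nlinarith [mul_lt_mul_of_pos_left key (mul_pos hs he)]
end

section
/- For λ_s, λ_g, λ_e > 0 and n ≥ 1, the FC_allRC freshness (1/n)·∑_{k=1}^{n} ∏_{j=1}^{k} (λ_s+(j−1)λ_g)/(λ_s+(j−1)λ_g+λ_e) is strictly greater than the DC_RC freshness (λ_s/(n·λ_e))·(1 − (λ_s/(λ_s+λ_e))^n) whenever n ≥ 2. -/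
theorem stmt_9 (lams lamg lame : ℝ) (hs : 0 < lams) (hg : 0 < lamg) (he : 0 < lame)
    (n : ℕ) (hn : 2 ≤ n) :
    (1 / n) * ∑ k ∈ Finset.Icc 1 n, ∏ j ∈ Finset.Icc 1 k,
        (lams + ((j : ℝ) - 1) * lamg) / (lams + ((j : ℝ) - 1) * lamg + lame)
      > (lams / (n * lame)) * (1 - (lams / (lams + lame)) ^ n) := by
  set r : ℝ := lams / (lams + lame) with hr
  have hse : 0 < lams + lame := by linarith
  have hr0 : 0 < r := div_pos hs hse
  have hr1 : r < 1 := (div_lt_one hse).mpr (by linarith)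
  have hf : ∀ j : ℕ, (1:ℝ) ≤ (j:ℝ) →
      r ≤ (lams + ((j : ℝ) - 1) * lamg) / (lams + ((j : ℝ) - 1) * lamg + lame) := by
    intro j hj
    rw [hr, div_le_div_iff₀ hse (by nlinarith)]
    nlinarith [mul_nonneg (mul_nonneg (sub_nonneg.mpr hj) hg.le) he.le]
  -- each product ≥ r^k
  have hprod : ∀ k ∈ Finset.Icc 1 n, r ^ k ≤ ∏ j ∈ Finset.Icc 1 k,
      (lams + ((j : ℝ) - 1) * lamg) / (lams + ((j : ℝ) - 1) * lamg + lame) := by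
    intro k hk
    have : r ^ k = ∏ _j ∈ Finset.Icc 1 k, r := by
      rw [Finset.prod_const, Nat.card_Icc]; norm_num
    rw [this]
    apply Finset.prod_le_prod
    · intro i _; exact le_of_lt hr0
    · intro i hi
      exact hf i (by exact_mod_cast (Finset.mem_Icc.mp hi).1)
  -- strict for k = n
  have hstrict : r ^ n < ∏ j ∈ Finset.Icc 1 n,
      (lams + ((j : ℝ) - 1) * lamg) / (lams + ((j : ℝ) - 1) * lamg + lame) := by
    have hrn : r ^ n = ∏ _j ∈ Finset.Icc 1 n, r := by
      rw [Finset.prod_const, Nat.card_Icc]; norm_num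
    rw [hrn]
    refine Finset.prod_lt_prod (fun i _ => hr0)
      (fun i hi => hf i (by exact_mod_cast (Finset.mem_Icc.mp hi).1)) ⟨2, ?_, ?_⟩
    · exact Finset.mem_Icc.mpr ⟨by norm_num, hn⟩
    · push_cast
      rw [hr, div_lt_div_iff₀ hse (by nlinarith)]
      nlinarith
  have hsumlt : ∑ k ∈ Finset.Icc 1 n, r ^ k <
      ∑ k ∈ Finset.Icc 1 n, ∏ j ∈ Finset.Icc 1 k,
        (lams + ((j : ℝ) - 1) * lamg) / (lams + ((j : ℝ) - 1) * lamg + lame) :=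
    Finset.sum_lt_sum hprod ⟨n, Finset.mem_Icc.mpr ⟨by omega, le_refl n⟩, hstrict⟩
  -- geometric sum identity
  have hgeo : ∑ k ∈ Finset.Icc 1 n, r ^ k = r * (1 - r ^ n) / (1 - r) := by
    rw [← Finset.Ico_add_one_right_eq_Icc, geom_sum_Ico (ne_of_lt hr1) (by omega)]
    rw [div_eq_div_iff (by linarith) (by linarith), pow_succ]
    ring
  have hrhs : (lams / (n * lame)) * (1 - r ^ n) =
      (1 / n) * ∑ k ∈ Finset.Icc 1 n, r ^ k := by
    rw [hgeo, hr]
    have h1r : (1:ℝ) - lams / (lams + lame) = lame / (lams + lame) := by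
      field_simp
      ring
    rw [h1r]
    have hn0 : (n:ℝ) ≠ 0 := Nat.cast_ne_zero.mpr (by omega)
    field_simp
  rw [hrhs]
  have hnpos : (0:ℝ) < 1 / n := by positivity
  exact (mul_lt_mul_iff_right₀ hnpos).mpr hsumlt
end

section
/- For λ_s, λ_c, λ_e > 0 and positive integers m, k, the clustered freshness with RC-Gossip at both tiers, [ (λ_s/(m·λ_e))·(1 − (λ_s/(λ_s+λ_e))^m) ] · [ (λ_c/(k·λ_e))·(1 − (λ_c/(λ_c+λ_e))^k) ], is strictly greater than the fully traditional clustered freshness [λ_s/(λ_s+m·λ_e)]·[λ_c/(λ_c+k·λ_e)] whenever m ≥ 2 and k ≥ 2. -/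
lemma Gle (r : ℝ) (hr0 : 0 < r) : ∀ n : ℕ, (((n : ℝ) + 1) - n * r) * r ^ n ≤ 1 := by
  intro n
  induction n with
  | zero => simp
  | succ n ih =>
    have hid : (((n + 1 : ℕ) : ℝ) + 1 - ((n + 1 : ℕ) : ℝ) * r) * r ^ (n + 1)
        = (((n : ℝ) + 1) - n * r) * r ^ n - ((n : ℝ) + 1) * (1 - r) ^ 2 * r ^ n := by
      push_cast; ring
    have hnn : 0 ≤ ((n : ℝ) + 1) * (1 - r) ^ 2 * r ^ n := by positivity
    rw [hid]; linarith

lemma Glt (r : ℝ) (hr0 : 0 < r) (hr1 : r < 1) (n : ℕ) :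
    (((n : ℝ) + 2) - ((n : ℝ) + 1) * r) * r ^ (n + 1) < 1 := by
  have h1 := Gle r hr0 n
  have h1r : 0 < 1 - r := by linarith
  have hpos : 0 < ((n : ℝ) + 1) * (1 - r) ^ 2 * r ^ n :=
    mul_pos (mul_pos (by positivity) (pow_pos h1r 2)) (pow_pos hr0 n)
  have hid : (((n : ℝ) + 2) - ((n : ℝ) + 1) * r) * r ^ (n + 1)
      = (((n : ℝ) + 1) - n * r) * r ^ n - ((n : ℝ) + 1) * (1 - r) ^ 2 * r ^ n := by
    ring
  rw [hid]; linarith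

lemma poly (r : ℝ) (hr0 : 0 < r) (hr1 : r < 1) (j : ℕ) :
    ((j : ℝ) + 2) * (1 - r) < (1 - r ^ (j + 2)) * (r + ((j : ℝ) + 2) * (1 - r)) := by
  have key := Glt r hr0 hr1 j
  rw [show r ^ (j + 2) = r * r ^ (j + 1) from by ring]
  nlinarith [mul_pos hr0 (sub_pos.mpr key)]

lemma tier (lam lame : ℝ) (h : 0 < lam) (he : 0 < lame) (n : ℕ) (hn : 2 ≤ n) :
    lam / (lam + n * lame) < lam / (n * lame) * (1 - (lam / (lam + lame)) ^ n) := by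
  obtain ⟨j, rfl⟩ : ∃ j, n = j + 2 := ⟨n - 2, by omega⟩
  have hA : 0 < lam + lame := by linarith
  obtain ⟨r, hrdef⟩ : ∃ r : ℝ, r = lam / (lam + lame) := ⟨_, rfl⟩
  obtain ⟨L, hLdef⟩ : ∃ L : ℝ, L = lam + lame := ⟨_, rfl⟩
  have hL : 0 < L := hLdef ▸ hA
  have hr0 : 0 < r := by rw [hrdef]; positivity
  have hr1 : r < 1 := by rw [hrdef, div_lt_one hA]; linarith
  have hlam : lam = r * L := by rw [hrdef, hLdef]; field_simp
  have hlame : lame = (1 - r) * L := by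
    rw [hrdef, hLdef]; field_simp; ring
  have hkey := poly r hr0 hr1 j
  rw [← hrdef]
  push_cast
  rw [div_lt_iff₀ (by positivity), div_mul_eq_mul_div, div_mul_eq_mul_div,
    lt_div_iff₀ (by positivity)]
  rw [hlam, hlame]
  nlinarith [mul_pos (mul_pos hr0 (mul_pos hL hL)) (sub_pos.mpr hkey)]

theorem stmt_11 (lams lamc lame : ℝ) (hs : 0 < lams) (hc : 0 < lamc) (he : 0 < lame)
    (m k : ℕ) (hm : 2 ≤ m) (hk : 2 ≤ k) :
    ((lams / (m * lame)) * (1 - (lams / (lams + lame)) ^ m))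
      * ((lamc / (k * lame)) * (1 - (lamc / (lamc + lame)) ^ k))
      > (lams / (lams + m * lame)) * (lamc / (lamc + k * lame)) := by
  have h1 := tier lams lame hs he m hm
  have h2 := tier lamc lame hc he k hk
  have p1 : 0 < lams / (lams + m * lame) := by positivity
  have p2 : 0 < lamc / (lamc + k * lame) := by positivity
  exact mul_lt_mul'' h1 h2 p1.le p2.le
end

section
/- For any λ_s, λ_e > 0, α := λ_e/λ_s, and n ≥ 1, the DC_RC freshness can be written purely in terms of α as (1/(nα))·(1 − (1/(1+α))^n), and this expression is strictly decreasing in α on (0, ∞) and tends to 0 as α → ∞. -/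
open Filter

lemma key_sum (n : ℕ) (a : ℝ) (ha : 0 < a) :
    (1 / (n * a)) * (1 - (1 / (1 + a)) ^ n)
      = (1 / n) * ∑ k ∈ Finset.range n, (1 / (1 + a)) ^ (k + 1) := by
  have h1a : (0:ℝ) < 1 + a := by linarith
  have hx1 : (1 / (1 + a) : ℝ) ≠ 1 := by
    have : (1 / (1 + a) : ℝ) < 1 := by
      rw [div_lt_one h1a]; linarith
    exact ne_of_lt this
  have hsum : ∑ k ∈ Finset.range n, (1 / (1 + a)) ^ (k + 1)
      = (∑ k ∈ Finset.range n, (1 / (1 + a)) ^ k) * (1 / (1 + a)) := by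
    rw [Finset.sum_mul]
    exact Finset.sum_congr rfl fun k _ => (pow_succ _ _)
  rw [hsum, geom_sum_eq hx1]
  rcases Nat.eq_zero_or_pos n with h | h
  · simp [h]
  · have hn0 : (n : ℝ) ≠ 0 := Nat.cast_ne_zero.mpr h.ne'
    field_simp
    linear_combination ((1 + a)⁻¹ ^ n - 1) * mul_inv_cancel₀ ha.ne'

lemma xlt {a b : ℝ} (ha : 0 < a) (hab : a < b) :
    (1 / (1 + b) : ℝ) < 1 / (1 + a) :=
  one_div_lt_one_div_of_lt (by linarith) (by linarith)

theorem stmt_17 (lams lame : ℝ) (hs : 0 < lams) (he : 0 < lame)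
    (n : ℕ) (hn : 1 ≤ n) :
    (lams / (n * lame)) * (1 - (lams / (lams + lame)) ^ n)
      = (1 / (n * (lame / lams))) * (1 - (1 / (1 + lame / lams)) ^ n) ∧
    StrictAntiOn (fun α : ℝ => (1 / (n * α)) * (1 - (1 / (1 + α)) ^ n)) (Set.Ioi 0) ∧
    Filter.Tendsto (fun α : ℝ => (1 / (n * α)) * (1 - (1 / (1 + α)) ^ n))
      Filter.atTop (nhds 0) := by
  have hn0 : (0:ℝ) < n := by exact_mod_cast hn
  refine ⟨?_, ?_, ?_⟩
  · have h1 : lams / (lams + lame) = 1 / (1 + lame / lams) := by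
      rw [eq_div_iff (by positivity)]
      field_simp
    rw [h1]
    congr 1
    rw [div_eq_div_iff (by positivity) (by positivity)]
    field_simp
  · intro a ha b hb hab
    simp only [Set.mem_Ioi] at ha hb
    simp only
    rw [key_sum n a ha, key_sum n b hb]
    have hx := xlt ha hab
    have hxb : (0:ℝ) < 1 / (1 + b) := by positivity
    apply mul_lt_mul_of_pos_left _ (by positivity : (0:ℝ) < 1 / n)
    apply Finset.sum_lt_sum_of_nonempty (Finset.nonempty_range_iff.mpr (by omega))
    intro k _
    exact pow_lt_pow_left₀ hx hxb.le (Nat.succ_ne_zero k)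
  · have hg : Tendsto (fun α : ℝ => 1 / (n * α)) atTop (nhds 0) := by
      simp only [one_div]
      exact (Filter.Tendsto.const_mul_atTop hn0 tendsto_id).inv_tendsto_atTop
    apply squeeze_zero' ?_ ?_ hg
    · filter_upwards [eventually_gt_atTop (0:ℝ)] with a ha
      have hx : (0:ℝ) ≤ 1 / (1 + a) := by positivity
      have hx1 : (1 / (1 + a) : ℝ) ≤ 1 := by
        rw [div_le_one (by linarith)]; linarith
      have : (1 / (1 + a) : ℝ) ^ n ≤ 1 := pow_le_one₀ hx hx1
      have h1 : (0:ℝ) ≤ 1 / (n * a) := by positivity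
      nlinarith
    · filter_upwards [eventually_gt_atTop (0:ℝ)] with a ha
      have hx : (0:ℝ) ≤ (1 / (1 + a) : ℝ) ^ n := by positivity
      have h1 : (0:ℝ) ≤ 1 / (n * a) := by positivity
      nlinarith
end
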